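/- arXiv:2209.08889 — 3 statements merged into one kernel-verified Lean document; each statement's English description precedes it below -/
import Mathlib

section
/- Let (Ω, F, μ) be a probability space, x : Ω → ℝ measurable, and let T and w be square-integrable real random variables with T and w independent and E[w] = 0. Let φ : ℝ → ℝ be Borel measurable with φ∘x = T + w μ-almost everywhere, let m = μ[T | 𝔪_x] be the conditional expectation of T given the σ-algebra 𝔪_x generated by x, and suppose φ∘x = ρ·m μ-almost everywhere for some constant ρ. Then ρ·E[T·m] = E[T²]. -/
open MeasureTheory ProbabilityTheory

/-!
The two descriptions of `φ ∘ x` force `ρ · m = T + w` almost everywhere, hence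
`ρ · E[T m] = E[T (T + w)] = E[T²] + E[T] E[w] = E[T²]`, the cross term factoring by independence.
-/

namespace ProbabilityTheory

variable {Ω : Type*} [MeasurableSpace Ω] {μ : Measure Ω} {T w : Ω → ℝ}

theorem IndepFun.integral_mul_eq_zero_of_integral_eq_zero (hTw : IndepFun T w μ)
    (hT : AEStronglyMeasurable T μ) (hw : AEStronglyMeasurable w μ) (hw0 : ∫ ω, w ω ∂μ = 0) :
    ∫ ω, T ω * w ω ∂μ = 0 := by
  rw [hTw.integral_fun_mul_eq_mul_integral hT hw, hw0, mul_zero]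

theorem IndepFun.integral_mul_add_eq_integral_sq [IsFiniteMeasure μ] (hTw : IndepFun T w μ)
    (hT : MemLp T 2 μ) (hw : Integrable w μ) (hw0 : ∫ ω, w ω ∂μ = 0) :
    ∫ ω, T ω * (T ω + w ω) ∂μ = ∫ ω, T ω ^ 2 ∂μ := by
  have hTT : Integrable (fun ω => T ω ^ 2) μ := hT.integrable_sq
  have hTw_int : Integrable (fun ω => T ω * w ω) μ :=
    hTw.integrable_mul (hT.integrable one_le_two) hw
  calc ∫ ω, T ω * (T ω + w ω) ∂μ = ∫ ω, (T ω ^ 2 + T ω * w ω) ∂μ := by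
        congr 1; ext ω; ring
    _ = ∫ ω, T ω ^ 2 ∂μ + ∫ ω, T ω * w ω ∂μ := integral_add hTT hTw_int
    _ = ∫ ω, T ω ^ 2 ∂μ := by
        rw [hTw.integral_mul_eq_zero_of_integral_eq_zero hT.aestronglyMeasurable
          hw.aestronglyMeasurable hw0, add_zero]

end ProbabilityTheory

theorem stmt_3_general {Ω : Type*} [MeasurableSpace Ω] (μ : Measure Ω) [IsProbabilityMeasure μ]
    (x : Ω → ℝ)
    (T w : Ω → ℝ)
    (hT2 : MemLp T 2 μ) (hw2 : MemLp w 2 μ)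
    (hindep : IndepFun T w μ) (hwmean : ∫ ω, w ω ∂μ = 0)
    (φ : ℝ → ℝ)
    (hmodel : (fun ω => φ (x ω)) =ᵐ[μ] fun ω => T ω + w ω)
    (m : Ω → ℝ)
    (ρ : ℝ) (hρ : (fun ω => φ (x ω)) =ᵐ[μ] fun ω => ρ * m ω) :
    ρ * ∫ ω, T ω * m ω ∂μ = ∫ ω, (T ω) ^ 2 ∂μ := by
  have hρm : (fun ω => ρ * m ω) =ᵐ[μ] fun ω => T ω + w ω := hρ.symm.trans hmodel
  calc ρ * ∫ ω, T ω * m ω ∂μ = ∫ ω, T ω * (ρ * m ω) ∂μ := by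
        rw [← integral_const_mul]; congr 1; ext ω; ring
    _ = ∫ ω, T ω * (T ω + w ω) ∂μ := integral_congr_ae (hρm.mono fun ω h => congrArg (T ω * ·) h)
    _ = ∫ ω, T ω ^ 2 ∂μ :=
        hindep.integral_mul_add_eq_integral_sq hT2 (hw2.integrable one_le_two) hwmean

/-- Population moment identity behind the AIR adjustment ratio: if `φ ∘ x = T + w` a.e. with
`T ⟂ w`, `E[w] = 0`, `m = E[T | σ(x)]`, and `φ ∘ x = ρ · m` a.e., then `ρ·E[T·m] = E[T²]`. -/
theorem stmt_3 {Ω : Type*} [MeasurableSpace Ω] (μ : Measure Ω) [IsProbabilityMeasure μ]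
    (x : Ω → ℝ) (hx : Measurable x)
    (T w : Ω → ℝ) (hTmeas : Measurable T) (hwmeas : Measurable w)
    (hT2 : MemLp T 2 μ) (hw2 : MemLp w 2 μ)
    (hindep : IndepFun T w μ) (hwmean : ∫ ω, w ω ∂μ = 0)
    (φ : ℝ → ℝ) (hφ : Measurable φ)
    (hmodel : (fun ω => φ (x ω)) =ᵐ[μ] fun ω => T ω + w ω)
    (m : Ω → ℝ) (hm : m = μ[T | MeasurableSpace.comap x Real.measurableSpace])
    (ρ : ℝ) (hρ : (fun ω => φ (x ω)) =ᵐ[μ] fun ω => ρ * m ω) :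
    ρ * ∫ ω, T ω * m ω ∂μ = ∫ ω, (T ω) ^ 2 ∂μ :=
  stmt_3_general μ x T w hT2 hw2 hindep hwmean φ hmodel m ρ hρ
end

section
/- Let z = (z₁, …, z_p) be a random vector on a probability space with each component square-integrable and mean zero, with positive definite covariance matrix Σ (Σᵢⱼ = E[zᵢ zⱼ]). Let x : Ω → ℝ be measurable and φ, φ′ : ℝ → ℝ Borel measurable. Suppose φ∘x = ⟨z, θ⟩ + w and φ′∘x = ⟨z, θ′⟩ + w′ almost everywhere, where w and w′ are square-integrable real random variables with mean zero, each independent of z, and where ‖θ‖₂ = ‖θ′‖₂ = 1. If β > 0 and β′ > 0 are constants with β·(φ∘x) = β′·(φ′∘x) almost everywhere, then β = β′, θ = θ′, and φ∘x = φ′∘x almost everywhere. -/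
open MeasureTheory ProbabilityTheory Matrix

/-!
Multiplying the model equation by `zᵢ` and integrating kills the noise term, because `w` is
independent of the centred `zᵢ`; this leaves the moment equations `Σ (βθ) = Σ (β'θ')`. Since `Σ`
is positive definite, hence invertible, `βθ = β'θ'`, and taking Euclidean norms with
`‖θ‖ = ‖θ'‖ = 1` and `β, β' > 0` separates the scale `β` from the direction `θ`.
-/

section Moments

variable {Ω ι : Type*} [MeasurableSpace Ω] {μ : Measure Ω} [Fintype ι]
  {z : Ω → ι → ℝ} {Sig : Matrix ι ι ℝ}

lemma integral_mul_dotProduct_add_eq_mulVec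
    (hz2 : ∀ i, MemLp (fun ω => z ω i) 2 μ) (hzmean : ∀ i, ∫ ω, z ω i ∂μ = 0)
    (hSig : ∀ i j, Sig i j = ∫ ω, z ω i * z ω j ∂μ)
    {v : Ω → ℝ} (hv2 : MemLp v 2 μ) (hvindep : IndepFun v z μ) (τ : ι → ℝ) (i : ι) :
    ∫ ω, z ω i * ((∑ j, z ω j * τ j) + v ω) ∂μ = (Sig *ᵥ τ) i := by
  have hzz : ∀ j, Integrable (fun ω => z ω i * (z ω j * τ j)) μ := fun j => by
    simpa only [Pi.mul_apply, mul_assoc] using ((hz2 i).integrable_mul (hz2 j)).mul_const (τ j)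
  have hnoise : ∫ ω, z ω i * v ω ∂μ = 0 := by
    have hind : IndepFun (fun ω => z ω i) v μ :=
      (hvindep.comp measurable_id (measurable_pi_apply i)).symm
    simpa [hzmean i] using
      hind.integral_mul_eq_mul_integral (hz2 i).aestronglyMeasurable hv2.aestronglyMeasurable
  have hzv : Integrable (fun ω => z ω i * v ω) μ := (hz2 i).integrable_mul hv2
  simp only [mul_add, Finset.mul_sum]
  rw [integral_add (integrable_finsetSum _ fun j _ => hzz j) hzv, hnoise, add_zero,
    integral_finsetSum _ fun j _ => hzz j]
  refine Finset.sum_congr rfl fun j _ => ?_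
  simp only [hSig, ← mul_assoc, integral_mul_const]

lemma mulVec_smul_eq_mulVec_smul_of_ae_eq
    (hz2 : ∀ i, MemLp (fun ω => z ω i) 2 μ) (hzmean : ∀ i, ∫ ω, z ω i ∂μ = 0)
    (hSig : ∀ i j, Sig i j = ∫ ω, z ω i * z ω j ∂μ)
    {θ θ' : ι → ℝ} {w w' : Ω → ℝ} (hw2 : MemLp w 2 μ) (hw'2 : MemLp w' 2 μ)
    (hwindep : IndepFun w z μ) (hw'indep : IndepFun w' z μ) {β β' : ℝ}
    (hae : ∀ᵐ ω ∂μ, β * ((∑ j, z ω j * θ j) + w ω) = β' * ((∑ j, z ω j * θ' j) + w' ω)) :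
    Sig *ᵥ (β • θ) = Sig *ᵥ (β' • θ') := by
  funext i
  rw [mulVec_smul, mulVec_smul, Pi.smul_apply, Pi.smul_apply, smul_eq_mul, smul_eq_mul,
    ← integral_mul_dotProduct_add_eq_mulVec hz2 hzmean hSig hw2 hwindep,
    ← integral_mul_dotProduct_add_eq_mulVec hz2 hzmean hSig hw'2 hw'indep,
    ← integral_const_mul, ← integral_const_mul]
  exact integral_congr_ae (hae.mono fun ω h => by simp only [mul_left_comm _ (z ω i), h])

end Moments

lemma eq_and_eq_of_smul_eq_smul_of_sqrt_sum_sq_eq_one {ι : Type*} [Fintype ι] {θ θ' : ι → ℝ}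
    {β β' : ℝ} (hβ : 0 < β) (hβ' : 0 < β') (hθ : √(∑ j, θ j ^ 2) = 1)
    (hθ' : √(∑ j, θ' j ^ 2) = 1) (h : β • θ = β' • θ') : β = β' ∧ θ = θ' := by
  have hnorm (c : ℝ) (t : ι → ℝ) : √(∑ j, (c • t) j ^ 2) = |c| * √(∑ j, t j ^ 2) := by
    simp only [Pi.smul_apply, smul_eq_mul, mul_pow, ← Finset.mul_sum,
      Real.sqrt_mul (sq_nonneg c), Real.sqrt_sq_eq_abs]
  have hββ' : β = β' := by
    have := congrArg (fun t => √(∑ j, t j ^ 2)) h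
    rwa [hnorm, hnorm, hθ, hθ', mul_one, mul_one, abs_of_pos hβ, abs_of_pos hβ'] at this
  subst hββ'
  exact ⟨rfl, smul_right_injective _ hβ.ne' h⟩

theorem stmt_5_general {Ω : Type*} [MeasurableSpace Ω] (μ : Measure Ω)
    {p : ℕ} (z : Ω → (Fin p → ℝ))
    (hz2 : ∀ i, MemLp (fun ω => z ω i) 2 μ)
    (hzmean : ∀ i, ∫ ω, z ω i ∂μ = 0)
    (Sig : Matrix (Fin p) (Fin p) ℝ)
    (hSig : ∀ i j, Sig i j = ∫ ω, z ω i * z ω j ∂μ)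
    (hSigpd : Sig.PosDef)
    (x : Ω → ℝ)
    (φ φ' : ℝ → ℝ)
    (θ θ' : Fin p → ℝ) (w w' : Ω → ℝ)
    (hw2 : MemLp w 2 μ) (hw'2 : MemLp w' 2 μ)
    (hwindep : IndepFun w z μ) (hw'indep : IndepFun w' z μ)
    (hmodel : (fun ω => φ (x ω)) =ᵐ[μ] fun ω => (∑ j, z ω j * θ j) + w ω)
    (hmodel' : (fun ω => φ' (x ω)) =ᵐ[μ] fun ω => (∑ j, z ω j * θ' j) + w' ω)
    (hθnorm : Real.sqrt (∑ j, θ j ^ 2) = 1) (hθ'norm : Real.sqrt (∑ j, θ' j ^ 2) = 1)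
    (β β' : ℝ) (hβ : 0 < β) (hβ' : 0 < β')
    (heq : (fun ω => β * φ (x ω)) =ᵐ[μ] fun ω => β' * φ' (x ω)) :
    β = β' ∧ θ = θ' ∧ (fun ω => φ (x ω)) =ᵐ[μ] fun ω => φ' (x ω) := by
  have hae : ∀ᵐ ω ∂μ,
      β * ((∑ j, z ω j * θ j) + w ω) = β' * ((∑ j, z ω j * θ' j) + w' ω) := by
    filter_upwards [heq, hmodel, hmodel'] with ω h h₁ h₂
    rwa [← h₁, ← h₂]
  have hscaled : β • θ = β' • θ' :=
    mulVec_injective_of_isUnit hSigpd.isUnit <|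
      mulVec_smul_eq_mulVec_smul_of_ae_eq hz2 hzmean hSig hw2 hw'2 hwindep hw'indep hae
  obtain ⟨rfl, rfl⟩ :=
    eq_and_eq_of_smul_eq_smul_of_sqrt_sum_sq_eq_one hβ hβ' hθnorm hθ'norm hscaled
  exact ⟨rfl, rfl, heq.mono fun ω h => mul_left_cancel₀ hβ.ne' h⟩

/-- Identifiability of the model `φ(x) = zᵀθ + w` under the normalization `‖θ‖₂ = 1`, `β > 0`:
if `β·(φ∘x) = β'·(φ'∘x)` a.e. then `β = β'`, `θ = θ'`, and `φ∘x = φ'∘x` a.e. -/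
theorem stmt_5 {Ω : Type*} [MeasurableSpace Ω] (μ : Measure Ω) [IsProbabilityMeasure μ]
    {p : ℕ} (z : Ω → (Fin p → ℝ)) (hzmeas : Measurable z)
    (hz2 : ∀ i, MemLp (fun ω => z ω i) 2 μ)
    (hzmean : ∀ i, ∫ ω, z ω i ∂μ = 0)
    (Sig : Matrix (Fin p) (Fin p) ℝ)
    (hSig : ∀ i j, Sig i j = ∫ ω, z ω i * z ω j ∂μ)
    (hSigpd : Sig.PosDef)
    (x : Ω → ℝ) (hx : Measurable x)
    (φ φ' : ℝ → ℝ) (hφ : Measurable φ) (hφ' : Measurable φ')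
    (θ θ' : Fin p → ℝ) (w w' : Ω → ℝ)
    (hw2 : MemLp w 2 μ) (hw'2 : MemLp w' 2 μ)
    (hwmean : ∫ ω, w ω ∂μ = 0) (hw'mean : ∫ ω, w' ω ∂μ = 0)
    (hwindep : IndepFun w z μ) (hw'indep : IndepFun w' z μ)
    (hmodel : (fun ω => φ (x ω)) =ᵐ[μ] fun ω => (∑ j, z ω j * θ j) + w ω)
    (hmodel' : (fun ω => φ' (x ω)) =ᵐ[μ] fun ω => (∑ j, z ω j * θ' j) + w' ω)
    (hθnorm : Real.sqrt (∑ j, θ j ^ 2) = 1) (hθ'norm : Real.sqrt (∑ j, θ' j ^ 2) = 1)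
    (β β' : ℝ) (hβ : 0 < β) (hβ' : 0 < β')
    (heq : (fun ω => β * φ (x ω)) =ᵐ[μ] fun ω => β' * φ' (x ω)) :
    β = β' ∧ θ = θ' ∧ (fun ω => φ (x ω)) =ᵐ[μ] fun ω => φ' (x ω) :=
  stmt_5_general μ z hz2 hzmean Sig hSig hSigpd x φ φ' θ θ' w w' hw2 hw'2 hwindep hw'indep hmodel
    hmodel' hθnorm hθ'norm β β' hβ hβ' heq
end

section
/- Let Σ be a real p×p matrix and A a subset of the index set {1, …, p} such that the principal submatrix Σ_{AA} is invertible. Define Σ̃ = Σ − Σ_{*A} Σ_{AA}⁻¹ Σ_{A*}, where Σ_{*A} and Σ_{A*} denote the columns and rows of Σ indexed by A. Let θ, α ∈ ℝᵖ with αⱼ = 0 for every j ∉ A, let β ∈ ℝ, and set γ = βθ + α. Then Σ̃α = 0, and if moreover θᵀΣ̃θ ≠ 0, then β = (θᵀΣ̃γ)/(θᵀΣ̃θ). -/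
open Matrix

/-- Population identification identity for the sparse second stage: with
`Σ̃ = Σ − Σ_{*A} Σ_{AA}⁻¹ Σ_{A*}` and `α` supported on `A`, one has `Σ̃α = 0`, and if
`θᵀΣ̃θ ≠ 0`, then `β = (θᵀΣ̃γ)/(θᵀΣ̃θ)` where `γ = βθ + α`. -/
theorem stmt_6 {p : ℕ} (Sig : Matrix (Fin p) (Fin p) ℝ) (A : Finset (Fin p))
    (SigAA : Matrix {j // j ∈ A} {j // j ∈ A} ℝ)
    (hSigAA : SigAA = fun i j => Sig i.1 j.1)
    (hinv : IsUnit SigAA.det)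
    (SigStarA : Matrix (Fin p) {j // j ∈ A} ℝ) (hSigStarA : SigStarA = fun i a => Sig i a.1)
    (SigAStar : Matrix {j // j ∈ A} (Fin p) ℝ) (hSigAStar : SigAStar = fun a j => Sig a.1 j)
    (SigTilde : Matrix (Fin p) (Fin p) ℝ)
    (hSigTilde : SigTilde = Sig - SigStarA * SigAA⁻¹ * SigAStar)
    (θ α : Fin p → ℝ) (hα : ∀ j ∉ A, α j = 0)
    (β : ℝ) (γ : Fin p → ℝ) (hγ : γ = β • θ + α) :
    SigTilde.mulVec α = 0 ∧
      (θ ⬝ᵥ SigTilde.mulVec θ ≠ 0 →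
        β = (θ ⬝ᵥ SigTilde.mulVec γ) / (θ ⬝ᵥ SigTilde.mulVec θ)) := by
  set αA : {j // j ∈ A} → ℝ := fun a => α a.1 with hαA
  have hsum : ∀ (M : Matrix (Fin p) (Fin p) ℝ) (i : Fin p),
      ∑ j, M i j * α j = ∑ a : {j // j ∈ A}, M i a.1 * αA a := by
    intro M i
    simp only [hαA]
    rw [← Finset.sum_subtype A (fun x => Iff.rfl) (fun j => M i j * α j)]
    refine (Finset.sum_subset A.subset_univ ?_).symm
    intro j _ hj
    simp [hα j hj]
  have h1 : Sig.mulVec α = SigStarA.mulVec αA := by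
    funext i
    simp only [mulVec, dotProduct, hSigStarA]
    exact hsum Sig i
  have h2 : SigAStar.mulVec α = SigAA.mulVec αA := by
    funext a
    simp only [mulVec, dotProduct, hSigAStar, hSigAA]
    exact hsum (fun i j => Sig a.1 j) a.1
  have hzero : SigTilde.mulVec α = 0 := by
    have hkey : SigAA⁻¹ *ᵥ (SigAA *ᵥ αA) = αA := by
      rw [mulVec_mulVec, Matrix.nonsing_inv_mul _ hinv, one_mulVec]
    rw [hSigTilde, sub_mulVec, ← mulVec_mulVec, ← mulVec_mulVec, h2, hkey, h1, sub_self]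
  refine ⟨hzero, fun hne => ?_⟩
  have : SigTilde.mulVec γ = β • SigTilde.mulVec θ := by
    rw [hγ, mulVec_add, mulVec_smul, hzero, add_zero]
  rw [this, dotProduct_smul, smul_eq_mul, mul_div_assoc, div_self hne, mul_one]
end
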